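/- arXiv:1102.1156 — 3 statements merged into one kernel-verified Lean document; each statement's English description precedes it below -/
import Mathlib

section
/- Let u ∈ ℂ with u not a nonpositive integer translated by (2vi/π)ℤ, and v ∈ ℝ with v ≠ 0. Then the Laurent series Ψ(u,v,z) = ∑_{n∈ℤ} Γ(u + 2ivn/π) z^n converges absolutely for every z in the annulus C_v = {z ∈ ℂ : e^{-|v|} < |z| < e^{|v|}}. -/
/-!
For `0 < x ≤ 1`, Euler's limit formula gives
`|Γ(x)/Γ(x + iy)|² = ∏ₙ (1 + y²/(x + n)²) ≥ ∏ₙ (1 + y²/(n + 1)²) = sinh(π|y|)/(π|y|)`,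
so `|Γ(x + iy)| = O(|y| e^{-π|y|/2})`. The functional equation moves this bound to any vertical
line at the cost of a polynomial factor in `|y|`. Along `u + 2ivn/π` the decay is therefore
`|n|^K e^{-|v||n|}`, and the two halves of the Laurent series are dominated by
`∑ nᴷ (e^{-|v|}|z|)ⁿ` and `∑ nᴷ (e^{-|v|}/|z|)ⁿ`, which converge on the annulus.
-/

open Complex Real

open Filter Finset Topology

theorem Real.tendsto_euler_sinh_prod (b : ℝ) :
    Tendsto (fun n : ℕ => π * b * ∏ j ∈ range n, (1 + b ^ 2 / ((j : ℝ) + 1) ^ 2))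
      atTop (𝓝 (sinh (π * b))) := by
  have h := (Complex.tendsto_euler_sin_prod (b * I)).mul_const (-I)
  have hseq : ∀ n : ℕ, π * (b * I) * (∏ j ∈ range n, (1 - (b * I) ^ 2 / ((j : ℂ) + 1) ^ 2)) * -I
      = ((π * b * ∏ j ∈ range n, (1 + b ^ 2 / ((j : ℝ) + 1) ^ 2) : ℝ) : ℂ) := by
    intro n
    simp only [mul_pow, I_sq, mul_neg_one, neg_div, sub_neg_eq_add]
    push_cast
    linear_combination (-(π : ℂ) * b * ∏ j ∈ range n, (1 + (b : ℂ) ^ 2 / ((j : ℂ) + 1) ^ 2)) * I_sq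
  have hlim : Complex.sin (π * (b * I)) * -I = (sinh (π * b) : ℂ) := by
    rw [← mul_assoc, ← ofReal_mul, sin_mul_I, Complex.ofReal_sinh]
    linear_combination (-Complex.sinh (π * b : ℝ)) * I_sq
  rw [← tendsto_ofReal_iff]
  simpa only [hseq, hlim] using h

theorem Complex.norm_GammaSeq_sq_mul_prod_le {x : ℝ} (hx0 : 0 < x) (hx1 : x ≤ 1) (y : ℝ) (n : ℕ) :
    ‖GammaSeq (x + y * I) n‖ ^ 2 * ∏ j ∈ range (n + 1), (1 + y ^ 2 / ((j : ℝ) + 1) ^ 2)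
      ≤ Real.GammaSeq x n ^ 2 := by
  set s : ℂ := x + y * I
  have hfactor (j : ℕ) : (1 + y ^ 2 / ((j : ℝ) + 1) ^ 2) * (x + j) ^ 2 ≤ ‖s + j‖ ^ 2 := by
    have hsj : s + j = ((x + j : ℝ) : ℂ) + y * I := by simp only [s]; push_cast; ring
    have hy : y ^ 2 / ((j : ℝ) + 1) ^ 2 * (x + j) ^ 2 ≤ y ^ 2 := by
      rw [div_mul_eq_mul_div, div_le_iff₀ (by positivity)]
      gcongr y ^ 2 * ?_ ^ 2
      linarith
    rw [hsj, norm_add_mul_I, sq_sqrt (by positivity)]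
    linarith
  have hprod : (∏ j ∈ range (n + 1), (1 + y ^ 2 / ((j : ℝ) + 1) ^ 2))
      * (∏ j ∈ range (n + 1), (x + j)) ^ 2 ≤ (∏ j ∈ range (n + 1), ‖s + j‖) ^ 2 := by
    rw [← prod_pow, ← prod_pow, ← prod_mul_distrib]
    exact prod_le_prod (fun j _ => by positivity) fun j _ => hfactor j
  have hnorm : ‖GammaSeq s n‖ = (n : ℝ) ^ x * n.factorial / ∏ j ∈ range (n + 1), ‖s + j‖ := by
    rw [GammaSeq, norm_div, norm_mul, norm_prod,
      norm_natCast_cpow_of_re_ne_zero _ (by simp [s]; positivity), norm_natCast]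
    simp [s]
  have hpos (j : ℕ) : 0 < ‖s + j‖ :=
    (by positivity : (0 : ℝ) < x + j).trans_le (by simpa [s] using re_le_norm (s + j))
  rw [hnorm, Real.GammaSeq, div_pow, div_pow, div_mul_eq_mul_div,
    div_le_div_iff₀ (pow_pos (prod_pos fun j _ => hpos j) 2) (by positivity), mul_assoc]
  exact mul_le_mul_of_nonneg_left hprod (by positivity)

theorem Complex.norm_Gamma_sq_mul_sinh_le {x : ℝ} (hx0 : 0 < x) (hx1 : x ≤ 1) (y : ℝ) :
    ‖Gamma (x + y * I)‖ ^ 2 * Real.sinh (π * |y|) ≤ Real.Gamma x ^ 2 * (π * |y|) := by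
  have hsinh := (Real.tendsto_euler_sinh_prod |y|).comp (tendsto_add_atTop_nat 1)
  simp only [sq_abs] at hsinh
  refine le_of_tendsto_of_tendsto ((((continuous_norm.tendsto _).comp
    (GammaSeq_tendsto_Gamma _)).pow 2).mul hsinh)
    (((Real.GammaSeq_tendsto_Gamma x).pow 2).mul_const _) (Eventually.of_forall fun n => ?_)
  have := mul_le_mul_of_nonneg_left (norm_GammaSeq_sq_mul_prod_le hx0 hx1 y n)
    (by positivity : 0 ≤ π * |y|)
  simp only [Function.comp_apply]
  linarith

theorem Complex.norm_Gamma_le_of_one_le_abs {x : ℝ} (hx0 : 0 < x) (hx1 : x ≤ 1) {y : ℝ}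
    (hy : 1 ≤ |y|) :
    ‖Gamma (x + y * I)‖ ≤ 2 * Real.Gamma x * (π * |y|) * Real.exp (-(π * |y|) / 2) := by
  set a := π * |y|
  have ha : 1 ≤ a := one_le_mul_of_one_le_of_one_le (by linarith [pi_gt_three]) hy
  have hsinh : Real.exp a / 4 ≤ Real.sinh a := by
    have := Real.add_one_le_exp a
    have := Real.exp_le_one_iff.mpr (by linarith : -a ≤ 0)
    rw [Real.sinh_eq]
    linarith
  have hmul : ‖Gamma (x + y * I)‖ ^ 2 * Real.exp a ≤ (2 * Real.Gamma x * a) ^ 2 := by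
    calc ‖Gamma (x + y * I)‖ ^ 2 * Real.exp a ≤ 4 * (‖Gamma (x + y * I)‖ ^ 2 * Real.sinh a) := by
          nlinarith [sq_nonneg ‖Gamma (x + y * I)‖]
      _ ≤ 4 * (Real.Gamma x ^ 2 * a) := by gcongr 4 * ?_; exact norm_Gamma_sq_mul_sinh_le hx0 hx1 y
      _ ≤ (2 * Real.Gamma x * a) ^ 2 := by nlinarith [sq_nonneg (Real.Gamma x)]
  have hsq : ‖Gamma (x + y * I)‖ ^ 2 ≤ (2 * Real.Gamma x * a * Real.exp (-a / 2)) ^ 2 := by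
    have hexp : Real.exp (-a / 2) ^ 2 * Real.exp a = 1 := by
      rw [← Real.exp_nat_mul, ← Real.exp_add]; ring_nf; exact Real.exp_zero
    nlinarith [Real.exp_pos (-a / 2)]
  exact (pow_le_pow_iff_left₀ (norm_nonneg _)
    (by positivity) two_ne_zero).mp hsq

theorem Complex.norm_Gamma_sub_nat_le {s : ℂ} (hs : 1 ≤ |s.im|) (n : ℕ) :
    ‖Gamma (s - n)‖ ≤ ‖Gamma s‖ := by
  induction n with
  | zero => simp
  | succ n ih =>
    have hnorm : 1 ≤ ‖s - (n + 1 : ℕ)‖ := hs.trans (by simpa using abs_im_le_norm (s - (n + 1 : ℕ)))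
    have hrec := Gamma_add_one _ (norm_pos_iff.mp (one_pos.trans_le hnorm))
    rw [show s - (n + 1 : ℕ) + 1 = s - n by push_cast; ring] at hrec
    calc ‖Gamma (s - (n + 1 : ℕ))‖ ≤ ‖s - (n + 1 : ℕ)‖ * ‖Gamma (s - (n + 1 : ℕ))‖ :=
          le_mul_of_one_le_left (norm_nonneg _) hnorm
      _ = ‖Gamma (s - n)‖ := by rw [hrec, norm_mul]
      _ ≤ ‖Gamma s‖ := ih

theorem Complex.norm_Gamma_add_nat_le {s : ℂ} (hs : 0 < s.re) (n : ℕ) :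
    ‖Gamma (s + n)‖ ≤ (‖s‖ + n) ^ n * ‖Gamma s‖ := by
  induction n with
  | zero => simp
  | succ n ih =>
    have hne : s + n ≠ 0 := fun h => by simpa [h] using (by simp; positivity : 0 < (s + n).re)
    rw [Nat.cast_succ, ← add_assoc, Gamma_add_one _ hne, norm_mul, pow_succ']
    calc ‖s + n‖ * ‖Gamma (s + n)‖ ≤ (‖s‖ + (n + 1 : ℕ)) * ((‖s‖ + n) ^ n * ‖Gamma s‖) := by
          gcongr
          · exact (norm_add_le _ _).trans (by simp)
      _ ≤ (‖s‖ + (n + 1 : ℕ)) * ((‖s‖ + (n + 1 : ℕ)) ^ n * ‖Gamma s‖) := by gcongr; simp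
      _ = _ := by ring

theorem Complex.exists_norm_Gamma_le_of_re_eq (X : ℝ) : ∃ C : ℝ, ∃ K : ℕ, 0 ≤ C ∧
    ∀ s : ℂ, s.re = X → 1 ≤ |s.im| → ‖Gamma s‖ ≤ C * |s.im| ^ K * Real.exp (-(π * |s.im|) / 2) := by
  set k : ℤ := ⌈X⌉ - 1
  set x : ℝ := X - k
  have hx0 : 0 < x := by have := Int.ceil_lt_add_one X; simp only [x, k]; push_cast; linarith
  have hx1 : x ≤ 1 := by have := Int.le_ceil X; simp only [x, k]; push_cast; linarith
  have hshift (s : ℂ) (hs : s.re = X) : s = (x + s.im * I) + k := by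
    apply Complex.ext <;> simp [x, hs]
  obtain ⟨n, hn | hn⟩ := Int.eq_nat_or_neg k
  · refine ⟨2 * Real.Gamma x * π * (n + 2) ^ n, n + 1, by positivity, fun s hre him => ?_⟩
    have hw : ‖(x : ℂ) + s.im * I‖ + n ≤ (n + 2) * |s.im| := by
      have := (norm_add_le _ _).trans_eq (by simp [abs_of_pos hx0] :
        ‖(x : ℂ)‖ + ‖(s.im : ℂ) * I‖ = x + |s.im|)
      nlinarith
    conv_lhs => rw [hshift s hre, hn, Int.cast_natCast]
    calc ‖Gamma (x + s.im * I + n)‖ ≤ (‖(x : ℂ) + s.im * I‖ + n) ^ n * ‖Gamma (x + s.im * I)‖ :=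
          norm_Gamma_add_nat_le (by simpa using hx0) n
      _ ≤ ((n + 2) * |s.im|) ^ n *
            (2 * Real.Gamma x * (π * |s.im|) * Real.exp (-(π * |s.im|) / 2)) := by
          gcongr
          exact norm_Gamma_le_of_one_le_abs hx0 hx1 him
      _ = _ := by rw [mul_pow]; ring
  · refine ⟨2 * Real.Gamma x * π, 1, by positivity, fun s hre him => ?_⟩
    conv_lhs => rw [hshift s hre, hn, Int.cast_neg, Int.cast_natCast, ← sub_eq_add_neg]
    calc ‖Gamma (x + s.im * I - n)‖ ≤ ‖Gamma (x + s.im * I)‖ :=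
          norm_Gamma_sub_nat_le (by simpa using him) n
      _ ≤ _ := (norm_Gamma_le_of_one_le_abs hx0 hx1 him).trans_eq (by ring)

theorem Complex.exists_norm_Gamma_add_mul_I_le (u : ℂ) : ∃ C : ℝ, ∃ K : ℕ, ∀ y : ℝ,
    1 + |u.im| ≤ |y| → ‖Gamma (u + y * I)‖ ≤ C * |y| ^ K * Real.exp (-(π * |y|) / 2) := by
  obtain ⟨C, K, hC, hΓ⟩ := exists_norm_Gamma_le_of_re_eq u.re
  refine ⟨C * (1 + |u.im|) ^ K * Real.exp (π * |u.im| / 2), K, fun y hy => ?_⟩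
  have hre : (u + y * I).re = u.re := by simp
  have him : (u + y * I).im = u.im + y := by simp
  have hlow : |y| - |u.im| ≤ |u.im + y| := by
    have := abs_add_le (u.im + y) (-u.im); rw [abs_neg] at this; ring_nf at this ⊢; linarith
  have hup : |u.im + y| ≤ (1 + |u.im|) * |y| := by
    have := abs_add_le u.im y; nlinarith [abs_nonneg u.im]
  calc ‖Gamma (u + y * I)‖ ≤ C * |u.im + y| ^ K * Real.exp (-(π * |u.im + y|) / 2) := by
        simpa only [him] using hΓ _ hre (by rw [him]; linarith)
    _ ≤ C * ((1 + |u.im|) * |y|) ^ K * Real.exp (π * |u.im| / 2 + -(π * |y|) / 2) := by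
        gcongr
        nlinarith [pi_pos]
    _ = _ := by rw [Real.exp_add, mul_pow]; ring

theorem summable_abs_pow_mul_exp_mul_zpow {a r : ℝ} (hr₁ : Real.exp (-a) < r)
    (hr₂ : r < Real.exp a) (K : ℕ) :
    Summable fun n : ℤ => |(n : ℝ)| ^ K * Real.exp (-a * |(n : ℝ)|) * r ^ n := by
  have hr : 0 < r := (Real.exp_pos _).trans hr₁
  have hgeom {ρ : ℝ} (hρ₀ : 0 < ρ) (hρ₁ : ρ < 1) : Summable fun n : ℕ => (n : ℝ) ^ K * ρ ^ n :=
    summable_pow_mul_geometric_of_norm_lt_one K (by rwa [norm_of_nonneg hρ₀.le])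
  have hρ_nat : Real.exp (-a) * r < 1 :=
    calc Real.exp (-a) * r < Real.exp (-a) * Real.exp a := by gcongr
      _ = 1 := by rw [← Real.exp_add, neg_add_cancel, Real.exp_zero]
  have hρ_neg : Real.exp (-a) * r⁻¹ < 1 := by rwa [← div_eq_mul_inv, div_lt_one hr]
  apply Summable.of_nat_of_neg
  · refine (hgeom (by positivity) hρ_nat).congr fun n => ?_
    simp only [Int.cast_natCast, Nat.abs_cast, zpow_natCast, mul_pow, ← Real.exp_nat_mul]
    ring_nf
  · refine (hgeom (by positivity) hρ_neg).congr fun n => ?_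
    simp only [Int.cast_neg, Int.cast_natCast, abs_neg, Nat.abs_cast, zpow_neg, zpow_natCast,
      mul_pow, inv_pow, ← Real.exp_nat_mul]
    ring_nf

theorem stmt_1_general (u : ℂ) (v : ℝ) (hv : v ≠ 0)
    (z : ℂ) (hz1 : Real.exp (-|v|) < ‖z‖) (hz2 : ‖z‖ < Real.exp |v|) :
    Summable (fun n : ℤ => ‖Complex.Gamma (u + 2 * Complex.I * v * n / (π : ℂ)) * z ^ n‖) := by
  obtain ⟨C, K, hΓ⟩ := exists_norm_Gamma_add_mul_I_le u
  have hc : 2 * v / π ≠ 0 := by positivity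
  have hfar : ∀ᶠ n : ℤ in cofinite, 1 + |u.im| ≤ |2 * v / π * n| := by
    filter_upwards [(tendsto_norm_cocompact_atTop.comp
      (Int.tendsto_zmultiplesHom_cofinite hc)).eventually_ge_atTop (1 + |u.im|)] with n hn
    simpa [mul_comm, abs_mul, abs_div] using hn
  refine Summable.of_norm_bounded_eventually
    ((summable_abs_pow_mul_exp_mul_zpow hz1 hz2 K).mul_left (C * |2 * v / π| ^ K)) ?_
  filter_upwards [hfar] with n hn
  have harg : u + 2 * I * v * n / π = u + ((2 * v / π * n : ℝ) : ℂ) * I := by push_cast; ring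
  have hexp : π * |2 * v / π * n| / 2 = |v| * |(n : ℝ)| := by
    rw [abs_mul, abs_div, abs_mul, abs_of_pos pi_pos, abs_two]; field_simp
  rw [norm_norm, norm_mul, norm_zpow, harg]
  calc ‖Gamma (u + ((2 * v / π * n : ℝ) : ℂ) * I)‖ * ‖z‖ ^ n
      ≤ C * |2 * v / π * n| ^ K * Real.exp (-(π * |2 * v / π * n|) / 2) * ‖z‖ ^ n := by
        gcongr; exact hΓ _ hn
    _ = _ := by rw [neg_div, hexp, abs_mul (2 * v / π), mul_pow]; ring_nf

theorem stmt_1 (u : ℂ) (v : ℝ) (hv : v ≠ 0)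
    (hu : ∀ m : ℕ, ∀ k : ℤ, u ≠ -(m : ℂ) + (2 * v * Complex.I / (π : ℂ)) * k)
    (z : ℂ) (hz1 : Real.exp (-|v|) < ‖z‖) (hz2 : ‖z‖ < Real.exp |v|) :
    Summable (fun n : ℤ => ‖Complex.Gamma (u + 2 * Complex.I * v * n / (π : ℂ)) * z ^ n‖) :=
  stmt_1_general u v hv z hz1 hz2
end

section
/- Let u ∈ ℂ with Re u > 0 and q > 1. The holomorphic function S₊(u,q,ζ) = ∑_{k≥0} q^{ku} e^{-ζ q^k} on the half-plane Re ζ > 0 has the imaginary axis Re ζ = 0 as natural boundary: there is no point ζ₀ with Re ζ₀ = 0 at which S₊ extends holomorphically to a neighborhood. -/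
open Complex Real Filter Topology MeasureTheory

/-!
Integrating `S₊(σ + it) e^{i q^K t}` over an interval of length `2h` isolates the `K`-th term,
because every other frequency `q^k` differs from `q^K` by at least `(1 - 1/q) q^K`. At
`σ = q^{-K}` the `K`-th term has modulus `e^{-1} q^{K Re u}`, while the moduli of all the terms add
up to `O(q^{K Re u})`, so the other terms contribute only `O(q^{K Re u - K})`. Hence `|S₊|` reaches
size `≳ q^{K Re u}` on the segment `q^{-K} + i[t₀ - h, t₀ + h]`, for every large `K`: `S₊` is
unbounded on every neighbourhood of `i t₀` within the half-plane, whereas a holomorphic extension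
would be bounded near `i t₀`.
-/

lemma norm_integral_exp_ofReal_mul_I_le {ω : ℝ} (hω : ω ≠ 0) (s t : ℝ) :
    ‖∫ x in s..t, Complex.exp (ω * x * I)‖ ≤ 2 / |ω| := by
  have hωI : (ω : ℂ) * I ≠ 0 := mul_ne_zero (ofReal_ne_zero.2 hω) I_ne_zero
  have hunit (x : ℝ) : ‖Complex.exp ((ω : ℂ) * I * x)‖ = 1 := by
    rw [mul_right_comm, ← ofReal_mul, norm_exp_ofReal_mul_I]
  simp_rw [mul_right_comm (ω : ℂ) _ I]
  rw [integral_exp_mul_complex hωI, norm_div, norm_mul, norm_real, norm_I, mul_one, norm_eq_abs]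
  gcongr
  calc _ ≤ ‖Complex.exp ((ω : ℂ) * I * t)‖ + ‖Complex.exp ((ω : ℂ) * I * s)‖ := norm_sub_le _ _
    _ = 2 := by rw [hunit, hunit]; norm_num

theorem norm_coeff_mul_le_of_norm_tsum_exp_le {ι : Type*} [Countable ι] {a : ι → ℂ}
    (ha : Summable fun k => ‖a k‖) {ω : ι → ℝ} {K : ι} (hωK : ω K = 0) {m : ℝ} (hm : 0 < m)
    (hω : ∀ k ≠ K, m ≤ |ω k|) {s t M : ℝ} (hst : s ≤ t)
    (hM : ∀ x ∈ Set.Icc s t, ‖∑' k, a k * Complex.exp (ω k * x * I)‖ ≤ M) :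
    ‖a K‖ * (t - s) ≤ M * (t - s) + 2 / m * ∑' k, ‖a k‖ := by
  classical
  set J : ι → ℂ := fun k => ∫ x in s..t, Complex.exp (ω k * x * I)
  have hJK : J K = t - s := by simp [J, hωK]
  have hJ (k : ι) (hk : k ≠ K) : ‖J k‖ ≤ 2 / m := by
    have hpos : 0 < |ω k| := hm.trans_le (hω k hk)
    exact (norm_integral_exp_ofReal_mul_I_le (abs_pos.1 hpos) s t).trans (by gcongr; exact hω k hk)
  have hunit (k : ι) (x : ℝ) : ‖a k * Complex.exp (ω k * x * I)‖ = ‖a k‖ := by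
    rw [norm_mul, ← ofReal_mul, norm_exp_ofReal_mul_I, mul_one]
  have hsum : HasSum (fun k => a k * J k) (∫ x in s..t, ∑' k, a k * Complex.exp (ω k * x * I)) := by
    simp_rw [J, ← intervalIntegral.integral_const_mul]
    refine intervalIntegral.hasSum_integral_of_dominated_convergence (fun k _ => ‖a k‖)
      (fun k => by fun_prop) (fun k => ae_of_all _ fun x _ => (hunit k x).le)
      (ae_of_all _ fun _ _ => ha) intervalIntegrable_const
      (ae_of_all _ fun x _ => (Summable.of_norm ?_).hasSum)
    simpa only [hunit] using ha
  have hrest : ‖∑' k, if k = K then 0 else a k * J k‖ ≤ 2 / m * ∑' k, ‖a k‖ := by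
    rw [← tsum_mul_left]
    refine tsum_of_norm_bounded (ha.mul_left _).hasSum fun k => ?_
    split_ifs with hk
    · simp only [norm_zero]; positivity
    · rw [norm_mul, mul_comm]; gcongr; exact hJ k hk
  have hintegral : ‖∫ x in s..t, ∑' k, a k * Complex.exp (ω k * x * I)‖ ≤ M * (t - s) := by
    simpa [abs_of_nonneg (sub_nonneg.2 hst)] using
      intervalIntegral.norm_integral_le_of_norm_le_const fun x hx =>
        hM x (Set.Ioc_subset_Icc_self (Set.uIoc_of_le hst ▸ hx))
  have hsplit := hsum.summable.tsum_eq_add_tsum_ite K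
  rw [hsum.tsum_eq, hJK] at hsplit
  calc ‖a K‖ * (t - s) = ‖a K * (t - s)‖ := by
        rw [norm_mul, ← ofReal_sub, norm_real, norm_eq_abs, abs_of_nonneg (sub_nonneg.2 hst)]
    _ ≤ _ := by
      rw [eq_sub_of_add_eq hsplit.symm]
      exact (norm_sub_le _ _).trans (add_le_add hintegral hrest)

lemma sub_one_mul_pow_le_mul_abs_pow_sub_pow {q : ℝ} (hq : 1 ≤ q) {j k : ℕ} (hjk : j ≠ k) :
    (q - 1) * q ^ k ≤ q * |q ^ k - q ^ j| := by
  have hqk : 1 ≤ q ^ k := one_le_pow₀ hq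
  rcases hjk.lt_or_gt with hlt | hgt
  · have hj : q ^ j * q ≤ q ^ k := pow_succ q j ▸ pow_le_pow_right₀ hq hlt
    rw [abs_of_nonneg (by nlinarith)]
    nlinarith
  · have hj : q ^ k * q ≤ q ^ j := pow_succ q k ▸ pow_le_pow_right₀ hq hgt
    rw [abs_sub_comm, abs_of_nonneg (by nlinarith)]
    nlinarith [mul_nonneg (zero_le_one.trans hqk) (sq_nonneg (q - 1))]

lemma summable_zpow_rpow_mul_exp_neg {q : ℝ} (hq : 1 < q) {α : ℝ} (hα : 0 < α) :
    Summable fun j : ℤ => (q ^ j) ^ α * Real.exp (-q ^ j) := by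
  have hq0 : 0 < q := one_pos.trans hq
  rw [summable_int_iff_summable_nat_and_neg]
  constructor
  · have hlim : Tendsto (fun n : ℕ => (q ^ n) ^ (α + 1) * Real.exp (-1 * q ^ n)) atTop (𝓝 0) :=
      (tendsto_rpow_mul_exp_neg_mul_atTop_nhds_zero _ _ one_pos).comp
        (tendsto_pow_atTop_atTop_of_one_lt hq)
    refine Summable.of_norm_bounded_eventually (summable_geometric_of_lt_one (inv_nonneg.2 hq0.le)
      (inv_lt_one_of_one_lt₀ hq)) ?_
    rw [Nat.cofinite_eq_atTop]
    filter_upwards [hlim.eventually_le_const one_pos] with n hn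
    have hqn : 0 < q ^ n := pow_pos hq0 n
    rw [zpow_natCast, norm_of_nonneg (by positivity), inv_pow, ← one_div, le_div_iff₀ hqn]
    rwa [rpow_add_one hqn.ne', neg_one_mul, mul_right_comm] at hn
  · refine Summable.of_nonneg_of_le (fun n => by positivity) (fun n => ?_)
      (summable_geometric_of_lt_one (by positivity) (inv_lt_one_of_one_lt₀
        (one_lt_rpow hq hα)))
    rw [← rpow_zpow_comm hq0.le, zpow_neg, zpow_natCast, inv_pow]
    exact mul_le_of_le_one_right (by positivity) (exp_le_one_iff.2 (neg_nonpos.2 (by positivity)))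

lemma pow_rpow_mul_exp_neg_div_pow {q : ℝ} (hq : 0 < q) (α : ℝ) (k K : ℕ) :
    (q ^ k) ^ α * Real.exp (-(q ^ k / q ^ K)) =
      (q ^ K) ^ α * ((q ^ ((k : ℤ) - K)) ^ α * Real.exp (-q ^ ((k : ℤ) - K))) := by
  rw [zpow_sub₀ hq.ne', zpow_natCast, zpow_natCast, ← mul_assoc,
    div_rpow (by positivity) (by positivity), mul_div_cancel₀ _ (by positivity)]

lemma natCast_sub_injective (K : ℕ) : Function.Injective fun k : ℕ => (k : ℤ) - K :=
  fun _ _ h => by simpa using h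

lemma summable_pow_rpow_mul_exp_neg_div_pow {q : ℝ} (hq : 1 < q) {α : ℝ} (hα : 0 < α) (K : ℕ) :
    Summable fun k : ℕ => (q ^ k) ^ α * Real.exp (-(q ^ k / q ^ K)) := by
  simp_rw [pow_rpow_mul_exp_neg_div_pow (one_pos.trans hq)]
  exact ((summable_zpow_rpow_mul_exp_neg hq hα).comp_injective (natCast_sub_injective K)).mul_left _

lemma tsum_pow_rpow_mul_exp_neg_div_pow_le {q : ℝ} (hq : 1 < q) {α : ℝ} (hα : 0 < α) (K : ℕ) :
    ∑' k : ℕ, (q ^ k) ^ α * Real.exp (-(q ^ k / q ^ K)) ≤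
      (q ^ K) ^ α * ∑' j : ℤ, (q ^ j) ^ α * Real.exp (-q ^ j) := by
  have hq0 : 0 < q := one_pos.trans hq
  simp_rw [pow_rpow_mul_exp_neg_div_pow hq0, tsum_mul_left]
  gcongr
  have hsum := summable_zpow_rpow_mul_exp_neg hq hα
  exact (hsum.comp_injective (natCast_sub_injective K)).tsum_le_tsum_of_inj _
    (natCast_sub_injective K) (fun _ _ => by positivity) (fun _ => le_rfl) hsum

noncomputable def lacunarySeries (u : ℂ) (q : ℝ) (ζ : ℂ) : ℂ :=
  ∑' k : ℕ, (q : ℂ) ^ ((k : ℂ) * u) * Complex.exp (-ζ * (q : ℂ) ^ k)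

lemma norm_ofReal_cpow_natCast_mul {q : ℝ} (hq : 0 < q) (k : ℕ) (u : ℂ) :
    ‖(q : ℂ) ^ ((k : ℂ) * u)‖ = (q ^ k) ^ u.re := by
  rw [norm_cpow_eq_rpow_re_of_pos hq, ← ofReal_natCast, re_ofReal_mul, rpow_natCast_mul hq.le]

lemma lacunarySeries_mul_exp_eq_tsum (u : ℂ) (q : ℝ) (K : ℕ) (x : ℝ) :
    lacunarySeries u q (((q ^ K)⁻¹ : ℝ) + x * I) * Complex.exp (q ^ K * x * I) =
      ∑' k : ℕ, (q : ℂ) ^ ((k : ℂ) * u) * (Real.exp (-(q ^ k / q ^ K)) : ℂ) *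
        Complex.exp ((q ^ K - q ^ k : ℝ) * x * I) := by
  rw [lacunarySeries, ← tsum_mul_right]
  congr 1 with k
  simp only [ofReal_exp, mul_assoc, ← Complex.exp_add]
  congr 2
  push_cast
  ring

lemma rpow_mul_le_of_norm_lacunarySeries_le {u : ℂ} (hu : 0 < u.re) {q : ℝ} (hq : 1 < q) (K : ℕ)
    {s t M : ℝ} (hst : s ≤ t)
    (hM : ∀ x ∈ Set.Icc s t, ‖lacunarySeries u q (((q ^ K)⁻¹ : ℝ) + x * I)‖ ≤ M) :
    (q ^ K) ^ u.re * (Real.exp (-1) * (t - s) -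
      2 * q / ((q - 1) * q ^ K) * ∑' j : ℤ, (q ^ j) ^ u.re * Real.exp (-q ^ j)) ≤ M * (t - s) := by
  have hq0 : 0 < q := one_pos.trans hq
  have hqK : 0 < q ^ K := pow_pos hq0 K
  have hnorm (k : ℕ) : ‖(q : ℂ) ^ ((k : ℂ) * u) * (Real.exp (-(q ^ k / q ^ K)) : ℂ)‖ =
      (q ^ k) ^ u.re * Real.exp (-(q ^ k / q ^ K)) := by
    rw [norm_mul, norm_ofReal_cpow_natCast_mul hq0, norm_real, norm_of_nonneg (exp_pos _).le]
  have hextract := norm_coeff_mul_le_of_norm_tsum_exp_le (K := K) (m := (q - 1) * q ^ K / q)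
    (a := fun k : ℕ => (q : ℂ) ^ ((k : ℂ) * u) * (Real.exp (-(q ^ k / q ^ K)) : ℂ))
    (ω := fun k => q ^ K - q ^ k)
    (by simpa only [hnorm] using summable_pow_rpow_mul_exp_neg_div_pow hq hu K) (sub_self _)
    (by positivity) (fun k hk => by
      rw [div_le_iff₀' hq0]; exact sub_one_mul_pow_le_mul_abs_pow_sub_pow hq.le hk) hst
    (fun x hx => by
      rw [← lacunarySeries_mul_exp_eq_tsum, norm_mul, ← ofReal_pow, ← ofReal_mul,
        norm_exp_ofReal_mul_I, mul_one]
      exact hM x hx)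
  simp only [hnorm] at hextract
  rw [div_self hqK.ne'] at hextract
  have htail := tsum_pow_rpow_mul_exp_neg_div_pow_le hq hu K
  have hconst : 2 / ((q - 1) * q ^ K / q) = 2 * q / ((q - 1) * q ^ K) := by
    field_simp
  rw [hconst] at hextract
  nlinarith [mul_le_mul_of_nonneg_left htail (by positivity : 0 ≤ 2 * q / ((q - 1) * q ^ K))]

theorem frequently_lt_norm_lacunarySeries {u : ℂ} (hu : 0 < u.re) {q : ℝ} (hq : 1 < q) {ζ₀ : ℂ}
    (hζ₀ : ζ₀.re = 0) (C : ℝ) : ∃ᶠ ζ in 𝓝 ζ₀, 0 < ζ.re ∧ C < ‖lacunarySeries u q ζ‖ := by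
  rw [Metric.nhds_basis_ball.frequently_iff]
  intro ε hε
  by_contra! hbound
  have hq0 : 0 < q := one_pos.trans hq
  set Φ := ∑' j : ℤ, (q ^ j) ^ u.re * Real.exp (-q ^ j)
  have hpow : Tendsto (fun K : ℕ => q ^ K) atTop atTop := tendsto_pow_atTop_atTop_of_one_lt hq
  have hsmall : ∀ᶠ K : ℕ in atTop, (q ^ K)⁻¹ < ε / 2 :=
    (tendsto_inv_atTop_zero.comp hpow).eventually_lt_const (half_pos hε)
  have hlarge : ∀ᶠ K : ℕ in atTop, C * ε <
      (q ^ K) ^ u.re * (Real.exp (-1) * ε - 2 * q / ((q - 1) * q ^ K) * Φ) := by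
    have hcorr : Tendsto (fun K : ℕ => 2 * q / ((q - 1) * q ^ K)) atTop (𝓝 0) :=
      tendsto_const_nhds.div_atTop (hpow.const_mul_atTop (sub_pos.2 hq))
    have hfactor := (tendsto_const_nhds (x := Real.exp (-1) * ε)).sub (hcorr.mul_const Φ)
    rw [zero_mul, sub_zero] at hfactor
    exact (((tendsto_rpow_atTop hu).comp hpow).atTop_mul_pos (by positivity)
      hfactor).eventually_gt_atTop _
  obtain ⟨K, hKsmall, hKlarge⟩ := (hsmall.and hlarge).exists
  have hre (x : ℝ) : ((((q ^ K)⁻¹ : ℝ) : ℂ) + x * I).re = (q ^ K)⁻¹ := by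
    rw [add_re, ofReal_re, mul_I_re, ofReal_im, neg_zero, add_zero]
  have hsegment (x : ℝ) (hx : x ∈ Set.Icc (ζ₀.im - ε / 2) (ζ₀.im + ε / 2)) :
      (((q ^ K)⁻¹ : ℝ) : ℂ) + x * I ∈ Metric.ball ζ₀ ε := by
    rw [Metric.mem_ball, dist_eq_norm]
    refine (norm_le_abs_re_add_abs_im _).trans_lt ?_
    simp only [sub_re, hre, hζ₀, sub_zero, sub_im, add_im, ofReal_im, mul_I_im, ofReal_re, zero_add]
    have hdist : |x - ζ₀.im| ≤ ε / 2 := abs_sub_le_iff.2 ⟨by linarith [hx.2], by linarith [hx.1]⟩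
    rw [abs_of_pos (by positivity)]
    linarith
  have hestimate := rpow_mul_le_of_norm_lacunarySeries_le hu hq K
    (by linarith : ζ₀.im - ε / 2 ≤ ζ₀.im + ε / 2)
    fun x hx => hbound _ (hsegment x hx) (by rw [hre]; positivity)
  rw [show ζ₀.im + ε / 2 - (ζ₀.im - ε / 2) = ε by ring] at hestimate
  linarith

theorem stmt_16 (u : ℂ) (hu : 0 < u.re) (q : ℝ) (hq : 1 < q) :
    ∀ ζ₀ : ℂ, ζ₀.re = 0 →
      ¬∃ (U : Set ℂ) (g : ℂ → ℂ), IsOpen U ∧ ζ₀ ∈ U ∧ DifferentiableOn ℂ g U ∧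
        ∀ ζ ∈ U, 0 < ζ.re →
          g ζ = ∑' k : ℕ, (q : ℂ) ^ ((k : ℂ) * u) * Complex.exp (-ζ * (q : ℂ) ^ k) := by
  rintro ζ₀ hζ₀ ⟨U, g, hU, hζ₀U, hg, hgS⟩
  have hgbdd : ∀ᶠ ζ in 𝓝 ζ₀, ‖g ζ‖ < ‖g ζ₀‖ + 1 :=
    (hg.continuousOn.continuousAt (hU.mem_nhds hζ₀U)).norm.eventually (gt_mem_nhds (lt_add_one _))
  obtain ⟨ζ, ⟨hgζ, hζU⟩, hre, hlt⟩ := ((hgbdd.and (hU.mem_nhds hζ₀U)).and_frequently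
    (frequently_lt_norm_lacunarySeries hu hq hζ₀ (‖g ζ₀‖ + 1))).exists
  rw [lacunarySeries, ← hgS ζ hζU hre] at hlt
  exact hlt.not_gt hgζ
end

section
/- Fix u ∈ ℂ with Re u > 0 and v > 0. Write φ(n) = arg Γ(u + 2ivn/π) (mod 2π). Then as n → ∞, φ(n+1) - φ(n) = (2v/π)·ln(2vn/π) + O(1/n) modulo 2π. -/
open Complex Real Filter Asymptotics

open Finset Topology
open scoped Nat

/-!
Gauss's product gives a continuous logarithm
`log Γ z = lim (z log N + log N! - ∑_{k ≤ N} log (z + k))`, whose imaginary part agrees with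
`arg Γ z` modulo `2π`; for `Re z = a > 0` and `Im z = T` it is
`lim (T log N - ∑_{k ≤ N} arctan (T / (a + k)))`. Raising `T` by `δ` moves each arctan by `δ`
times `(a + k) / ((a + k)² + T²)`, up to replacing `T` by `T + δ`, and the sum of these terms
over `k` differs from `∫ x / (x² + T²) dx = log ‖x + iT‖` by `O(1/T)`. Hence
`Im log Γ (z + iδ) - Im log Γ z = δ log ‖z‖ + O(δ / Im z)`, and with `z = u + iδn`,
`δ = 2v/π`, `log ‖z‖ = log (δn) + O(1/n)`.
-/

noncomputable def logGammaSeq (z : ℂ) (N : ℕ) : ℂ :=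
  z * Real.log N + Real.log N ! - ∑ k ∈ range (N + 1), log (z + k)

noncomputable def logGamma (z : ℂ) : ℂ :=
  limUnder atTop (logGammaSeq z)

lemma exp_logGammaSeq {z : ℂ} (hz : ∀ m : ℕ, z ≠ -m) {N : ℕ} (hN : N ≠ 0) :
    cexp (logGammaSeq z N) = Complex.GammaSeq z N := by
  have hzk (k : ℕ) : z + k ≠ 0 := fun h => hz k (eq_neg_of_add_eq_zero_left h)
  rw [logGammaSeq, Complex.exp_sub, Complex.exp_add, Complex.exp_sum, Complex.GammaSeq,
    ← ofReal_exp, Real.exp_log (by positivity), cpow_def_of_ne_zero (Nat.cast_ne_zero.mpr hN),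
    natCast_log, mul_comm z, Finset.prod_congr rfl fun k _ => Complex.exp_log (hzk k)]
  push_cast
  ring

lemma logGammaSeq_succ_sub (z : ℂ) (j : ℕ) (hz : z + (j + 1) ≠ 0) :
    logGammaSeq z (j + 1) - logGammaSeq z j =
      -z * Complex.log (1 - 1 / (j + 1)) - Complex.log (1 + z / (j + 1)) := by
  have hj : (0 : ℝ) < j + 1 := by positivity
  have hlog_add :
      Complex.log (z + (j + 1)) = Real.log (j + 1) + Complex.log (1 + z / (j + 1)) := by
    rw [← log_ofReal_mul hj]
    · push_cast; congr 1; field_simp; ring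
    · intro h; apply hz; field_simp at h ⊢; linear_combination h
  have hlog_sub : Complex.log (1 - 1 / (j + 1)) = Real.log j - Real.log (j + 1) := by
    rcases eq_or_ne j 0 with rfl | hj0
    · simp
    rw [← ofReal_sub, ← Real.log_div (by positivity) hj.ne', ofReal_log (by positivity)]
    push_cast; congr 1; field_simp; ring
  have hfac : Real.log (j + 1)! = Real.log (j + 1) + Real.log j ! := by
    rw [Nat.factorial_succ, Nat.cast_mul, Real.log_mul (by positivity) (by positivity),
      Nat.cast_succ]
  rw [logGammaSeq, logGammaSeq, sum_range_succ _ (j + 1), hfac, hlog_sub]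
  simp only [Nat.cast_add, Nat.cast_one, ofReal_add, hlog_add]
  ring

lemma tendsto_div_natCast_add_one (c : ℂ) :
    Tendsto (fun j : ℕ => c / (j + 1)) atTop (𝓝 0) := by
  simpa [Function.comp_def] using
    tendsto_const_div_atTop_nhds_zero_nat c |>.comp (tendsto_add_atTop_nat 1)

lemma isBigO_log_one_add_div_sub (c : ℂ) :
    (fun j : ℕ => Complex.log (1 + c / (j + 1)) - c / (j + 1)) =O[atTop]
      fun j : ℕ => 1 / ((j : ℝ) + 1) ^ 2 := by
  refine (Complex.log_sub_self_isBigO.comp_tendsto (tendsto_div_natCast_add_one c)).trans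
    (IsBigO.of_bound (‖c‖ ^ 2) (Eventually.of_forall fun j => ?_))
  have : ‖((j : ℂ) + 1)‖ = (j : ℝ) + 1 := by exact_mod_cast Complex.norm_natCast (j + 1)
  simp [this, div_eq_mul_inv, mul_pow]

lemma summable_logGammaSeq_succ_sub (z : ℂ) :
    Summable fun j => logGammaSeq z (j + 1) - logGammaSeq z j := by
  -- by `logGammaSeq_succ_sub`, the increment is `-z (log (1 + w) - w) - (log (1 + w') - w')`
  -- with `w = -1/(j+1)` and `w' = z/(j+1)`
  refine summable_of_isBigO_nat ?_ <|
    ((isBigO_log_one_add_div_sub (-1)).const_mul_left (-z)).sub (isBigO_log_one_add_div_sub z)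
      |>.congr' ?_ EventuallyEq.rfl
  · simpa using (summable_nat_add_iff 1).mpr (Real.summable_one_div_nat_pow.mpr one_lt_two)
  · have h1 : Tendsto (fun j : ℕ => 1 + z / (j + 1)) atTop (𝓝 1) := by
      simpa using (tendsto_div_natCast_add_one z).const_add 1
    filter_upwards [h1.eventually_ne one_ne_zero] with j hj
    rw [logGammaSeq_succ_sub z j fun h => hj (by field_simp; linear_combination h)]
    simp only [neg_div, ← sub_eq_add_neg]
    ring

lemma tendsto_logGammaSeq (z : ℂ) : Tendsto (logGammaSeq z) atTop (𝓝 (logGamma z)) := by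
  refine tendsto_nhds_limUnder
    ⟨logGammaSeq z 0 + ∑' j, (logGammaSeq z (j + 1) - logGammaSeq z j), ?_⟩
  refine ((summable_logGammaSeq_succ_sub z).tendsto_sum_tsum_nat.const_add _).congr fun N => ?_
  rw [sum_range_sub]; ring

lemma exp_logGamma {z : ℂ} (hz : ∀ m : ℕ, z ≠ -m) : cexp (logGamma z) = Gamma z :=
  tendsto_nhds_unique ((Complex.continuous_exp.tendsto _).comp (tendsto_logGammaSeq z))
    ((GammaSeq_tendsto_Gamma z).congr' <| (eventually_ne_atTop 0).mono
      fun _ hN => (exp_logGammaSeq hz hN).symm)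

lemma arg_Gamma_eq {z : ℂ} (hz : ∀ m : ℕ, z ≠ -m) :
    ∃ k : ℤ, arg (Gamma z) = (logGamma z).im + 2 * π * k :=
  ⟨-toIocDiv two_pi_pos (-π) (logGamma z).im, by
    rw [← exp_logGamma hz, arg_exp, toIocMod, zsmul_eq_mul]; push_cast; ring⟩

lemma hasDerivAt_arctan_div {x : ℝ} (hx : x ≠ 0) (t : ℝ) :
    HasDerivAt (fun t => Real.arctan (t / x)) (x / (x ^ 2 + t ^ 2)) t := by
  refine ((Real.hasDerivAt_arctan _).comp t ((hasDerivAt_id' t).div_const x)).congr_deriv ?_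
  field_simp

lemma arctan_div_sub_arctan_div_mem_Icc {x T₁ T₂ : ℝ} (hx : 0 < x) (hT₁ : 0 ≤ T₁)
    (hT : T₁ ≤ T₂) :
    Real.arctan (T₂ / x) - Real.arctan (T₁ / x) ∈
      Set.Icc ((T₂ - T₁) * (x / (x ^ 2 + T₂ ^ 2))) ((T₂ - T₁) * (x / (x ^ 2 + T₁ ^ 2))) := by
  have hf := hasDerivAt_arctan_div hx.ne'
  have hcont : ContinuousOn (fun t => Real.arctan (t / x)) (Set.Icc T₁ T₂) :=
    fun t _ => (hf t).continuousAt.continuousWithinAt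
  have hdiff : DifferentiableOn ℝ (fun t => Real.arctan (t / x)) (interior (Set.Icc T₁ T₂)) :=
    fun t _ => (hf t).differentiableAt.differentiableWithinAt
  have hmem₁ : T₁ ∈ Set.Icc T₁ T₂ := Set.left_mem_Icc.2 hT
  have hmem₂ : T₂ ∈ Set.Icc T₁ T₂ := Set.right_mem_Icc.2 hT
  rw [mul_comm, mul_comm (T₂ - T₁)]
  constructor
  · refine (convex_Icc T₁ T₂).mul_sub_le_image_sub_of_le_deriv hcont hdiff (fun t ht => ?_)
      T₁ hmem₁ T₂ hmem₂ hT
    rw [interior_Icc] at ht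
    rw [(hf t).deriv]
    gcongr <;> linarith [ht.1, ht.2]
  · refine (convex_Icc T₁ T₂).image_sub_le_mul_sub_of_deriv_le hcont hdiff (fun t ht => ?_)
      T₁ hmem₁ T₂ hmem₂ hT
    rw [interior_Icc] at ht
    rw [(hf t).deriv]
    gcongr; nlinarith [ht.1, ht.2]

lemma log_norm_add_mul_I (x T : ℝ) :
    Real.log ‖(x : ℂ) + T * I‖ = Real.log (x ^ 2 + T ^ 2) / 2 := by
  rw [norm_add_mul_I, Real.log_sqrt (by positivity)]

lemma hasDerivAt_log_norm_add_mul_I {T : ℝ} (hT : T ≠ 0) (x : ℝ) :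
    HasDerivAt (fun x : ℝ => Real.log ‖(x : ℂ) + T * I‖) (x / (x ^ 2 + T ^ 2)) x := by
  have hq : x ^ 2 + T ^ 2 ≠ 0 := by positivity
  have hsq : HasDerivAt (fun x : ℝ => x ^ 2 + T ^ 2) (2 * x) x := by
    simpa using (hasDerivAt_pow 2 x).add_const (T ^ 2)
  simp only [log_norm_add_mul_I]
  refine ((hsq.log hq).div_const 2).congr_deriv ?_
  field_simp

lemma hasDerivAt_div_sq_add_sq {T : ℝ} (hT : T ≠ 0) (x : ℝ) :
    HasDerivAt (fun x => x / (x ^ 2 + T ^ 2)) ((T ^ 2 - x ^ 2) / (x ^ 2 + T ^ 2) ^ 2) x := by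
  have hq : x ^ 2 + T ^ 2 ≠ 0 := by positivity
  have hsq : HasDerivAt (fun x : ℝ => x ^ 2 + T ^ 2) (2 * x) x := by
    simpa using (hasDerivAt_pow 2 x).add_const (T ^ 2)
  refine ((hasDerivAt_id' x).div hsq hq).congr_deriv ?_
  ring

lemma abs_div_sq_add_sq_sub_le {x y T : ℝ} (hT : T ≠ 0) (hx : 0 ≤ x)
    (hxy : y ∈ Set.Icc x (x + 1)) :
    |y / (y ^ 2 + T ^ 2) - x / (x ^ 2 + T ^ 2)| ≤ 1 / (x ^ 2 + T ^ 2) := by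
  have hq (t : ℝ) : 0 < t ^ 2 + T ^ 2 := by positivity
  have key := norm_image_sub_le_of_norm_deriv_le_segment' (C := 1 / (x ^ 2 + T ^ 2))
    (fun t _ => (hasDerivAt_div_sq_add_sq hT t).hasDerivWithinAt) (fun t ht => ?_) y hxy
  · rw [Real.norm_eq_abs] at key
    exact key.trans (mul_le_of_le_one_right (one_div_pos.2 (hq x)).le (by linarith [hxy.2]))
  · rw [Real.norm_eq_abs, abs_div, abs_of_pos (pow_pos (hq t) 2)]
    calc |T ^ 2 - t ^ 2| / (t ^ 2 + T ^ 2) ^ 2 ≤ (t ^ 2 + T ^ 2) / (t ^ 2 + T ^ 2) ^ 2 := by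
          gcongr; rw [abs_le]; constructor <;> nlinarith
      _ = 1 / (t ^ 2 + T ^ 2) := by field_simp
      _ ≤ 1 / (x ^ 2 + T ^ 2) := by gcongr; nlinarith [ht.1]

lemma abs_log_norm_add_one_sub_log_norm_sub_le {x T : ℝ} (hT : T ≠ 0) (hx : 0 ≤ x) :
    |Real.log ‖((x + 1 : ℝ) : ℂ) + T * I‖ - Real.log ‖(x : ℂ) + T * I‖ - x / (x ^ 2 + T ^ 2)|
      ≤ 1 / (x ^ 2 + T ^ 2) := by
  have hF (s : ℝ) :
      HasDerivAt (fun s : ℝ => Real.log ‖(s : ℂ) + T * I‖ - s * (x / (x ^ 2 + T ^ 2)))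
        (s / (s ^ 2 + T ^ 2) - x / (x ^ 2 + T ^ 2)) s := by
    simpa using (hasDerivAt_log_norm_add_mul_I hT s).fun_sub ((hasDerivAt_id' s).mul_const _)
  have key := norm_image_sub_le_of_norm_deriv_le_segment' (C := 1 / (x ^ 2 + T ^ 2))
    (fun s _ => (hF s).hasDerivWithinAt)
    (fun s hs => abs_div_sq_add_sq_sub_le hT hx (Set.Ico_subset_Icc_self hs)) (x + 1)
    (Set.right_mem_Icc.2 (by linarith))
  rw [Real.norm_eq_abs, add_sub_cancel_left, mul_one] at key
  convert key using 2
  ring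

lemma sum_one_div_sq_add_sq_le {a T : ℝ} (ha : 0 ≤ a) (hT : 1 ≤ T) (N : ℕ) :
    ∑ k ∈ range N, 1 / ((a + k) ^ 2 + T ^ 2) ≤ 4 / T := by
  -- `(a + k)² + T² ≥ (T + k)² / 2`, and `1 / ((T + k)² - 1/4)` telescopes
  have hterm (k : ℕ) : 1 / ((a + k) ^ 2 + T ^ 2) ≤
      2 / (T + k - 1 / 2) - 2 / (T + (k + 1 : ℕ) - 1 / 2) := by
    have hk : (0 : ℝ) ≤ k := k.cast_nonneg
    push_cast
    rw [div_sub_div _ _ (by linarith) (by linarith),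
      div_le_div_iff₀ (by positivity) (by nlinarith)]
    nlinarith [sq_nonneg (T - k), mul_nonneg ha hk]
  calc ∑ k ∈ range N, 1 / ((a + k) ^ 2 + T ^ 2)
      ≤ ∑ k ∈ range N, (2 / (T + k - 1 / 2) - 2 / (T + (k + 1 : ℕ) - 1 / 2)) :=
        sum_le_sum fun k _ => hterm k
    _ = 2 / (T - 1 / 2) - 2 / (T + N - 1 / 2) := by
      rw [sum_range_sub' (fun k : ℕ => 2 / (T + k - 1 / 2))]; simp
    _ ≤ 4 / T := by
      have h₁ : 0 ≤ 2 / (T + N - 1 / 2) :=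
        div_nonneg zero_le_two (by linarith [N.cast_nonneg (α := ℝ)])
      have h₂ : 2 / (T - 1 / 2) ≤ 4 / T := by
        rw [div_le_div_iff₀ (by linarith) (by linarith)]; linarith
      linarith

lemma abs_sum_div_sq_add_sq_sub_le {a T : ℝ} (ha : 0 ≤ a) (hT : 1 ≤ T) (N : ℕ) :
    |∑ k ∈ range N, (a + k) / ((a + k) ^ 2 + T ^ 2) -
        (Real.log ‖((a + N : ℝ) : ℂ) + T * I‖ - Real.log ‖(a : ℂ) + T * I‖)| ≤ 4 / T := by
  set f : ℕ → ℝ := fun k => Real.log ‖((a + k : ℝ) : ℂ) + T * I‖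
  have htel : Real.log ‖((a + N : ℝ) : ℂ) + T * I‖ - Real.log ‖(a : ℂ) + T * I‖ =
      ∑ k ∈ range N, (f (k + 1) - f k) := by
    rw [sum_range_sub]; simp [f]
  rw [htel, ← sum_sub_distrib]
  refine (abs_sum_le_sum_abs _ _).trans <| (sum_le_sum fun k _ => ?_).trans
    (sum_one_div_sq_add_sq_le ha hT N)
  rw [abs_sub_comm, sub_sub]
  have := abs_log_norm_add_one_sub_log_norm_sub_le (x := a + k) (T := T) (by positivity)
    (by positivity)
  simpa [f, add_assoc, sub_sub] using this

lemma arg_eq_arctan_of_re_pos {w : ℂ} (hw : 0 < w.re) : arg w = Real.arctan (w.im / w.re) := by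
  rw [← tan_arg, Real.arctan_tan (neg_pi_div_two_lt_arg_iff.2 (Or.inl hw))
    (arg_lt_pi_div_two_iff.2 (Or.inl hw))]

lemma im_logGammaSeq {z : ℂ} (hz : 0 < z.re) (N : ℕ) :
    (logGammaSeq z N).im =
      z.im * Real.log N - ∑ k ∈ range (N + 1), Real.arctan (z.im / (z.re + k)) := by
  have harg (k : ℕ) : (Complex.log (z + k)).im = Real.arctan (z.im / (z.re + k)) := by
    rw [log_im, arg_eq_arctan_of_re_pos (by simp only [add_re, natCast_re]; positivity)]
    simp
  simp only [logGammaSeq, sub_im, add_im, mul_im, ofReal_re, ofReal_im, im_sum, harg]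
  ring

lemma isBigO_log_norm_add_sub_log_norm {α E : Type*} [SeminormedAddCommGroup E] {l : Filter α}
    {ζ : α → E} (hζ : Tendsto (fun x => ‖ζ x‖) l atTop) (w : E) :
    (fun x => Real.log ‖w + ζ x‖ - Real.log ‖ζ x‖) =O[l] fun x => ‖ζ x‖⁻¹ := by
  refine IsBigO.of_bound (2 * ‖w‖) ?_
  filter_upwards [hζ.eventually_ge_atTop (2 * ‖w‖ + 1)] with x hx
  set y := ‖ζ x‖
  set p := ‖w + ζ x‖
  have hw := norm_nonneg w
  have hlo : y - ‖w‖ ≤ p := by simpa [add_comm] using norm_sub_norm_le (ζ x) (-w)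
  have hhi : p ≤ y + ‖w‖ := by simpa [add_comm] using norm_add_le (ζ x) w
  have hp : 0 < p := by linarith
  have hy : 0 < y := by linarith
  rw [Real.norm_eq_abs, Real.norm_eq_abs, abs_inv, abs_norm, abs_le, ← div_eq_mul_inv]
  constructor
  · have := Real.log_le_sub_one_of_pos (div_pos hy hp)
    rw [Real.log_div hy.ne' hp.ne'] at this
    have : y / p - 1 ≤ 2 * ‖w‖ / y := by
      rw [div_sub_one hp.ne', div_le_div_iff₀ hp hy]; nlinarith
    linarith
  · have := Real.log_le_sub_one_of_pos (div_pos hp hy)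
    rw [Real.log_div hp.ne' hy.ne'] at this
    have : p / y - 1 ≤ 2 * ‖w‖ / y := by
      rw [div_sub_one hy.ne', div_le_div_iff₀ hy hy]; nlinarith
    linarith

lemma sum_arctan_div_sub_arctan_div_mem_Icc {a T₁ T₂ : ℝ} (ha : 0 < a) (hT₁ : 1 ≤ T₁)
    (hT : T₁ ≤ T₂) (N : ℕ) :
    ∑ k ∈ range N, (Real.arctan (T₂ / (a + k)) - Real.arctan (T₁ / (a + k))) ∈ Set.Icc
      ((T₂ - T₁) *
        (Real.log ‖((a + N : ℝ) : ℂ) + T₂ * I‖ - Real.log ‖(a : ℂ) + T₂ * I‖ - 4 / T₂))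
      ((T₂ - T₁) *
        (Real.log ‖((a + N : ℝ) : ℂ) + T₁ * I‖ - Real.log ‖(a : ℂ) + T₁ * I‖ + 4 / T₁)) := by
  have hδ : 0 ≤ T₂ - T₁ := sub_nonneg.2 hT
  have hmem (k : ℕ) := arctan_div_sub_arctan_div_mem_Icc (x := a + k) (by positivity)
    (by linarith) hT
  have h₁ := abs_le.1 (abs_sum_div_sq_add_sq_sub_le ha.le hT₁ N)
  have h₂ := abs_le.1 (abs_sum_div_sq_add_sq_sub_le ha.le (hT₁.trans hT) N)
  constructor
  · calc _ ≤ (T₂ - T₁) * ∑ k ∈ range N, (a + k) / ((a + k) ^ 2 + T₂ ^ 2) := by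
          gcongr; linarith
      _ ≤ _ := by rw [mul_sum]; exact sum_le_sum fun k _ => (hmem k).1
  · calc _ ≤ (T₂ - T₁) * ∑ k ∈ range N, (a + k) / ((a + k) ^ 2 + T₁ ^ 2) := by
          rw [mul_sum]; exact sum_le_sum fun k _ => (hmem k).2
      _ ≤ _ := by gcongr; linarith

lemma tendsto_log_sub_log_norm_add_mul_I (a T : ℝ) :
    Tendsto (fun N : ℕ => Real.log N - Real.log ‖((a + N : ℝ) : ℂ) + T * I‖) atTop (𝓝 0) := by
  have hN : Tendsto (fun N : ℕ => ‖(N : ℂ)‖) atTop atTop := by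
    simpa using tendsto_natCast_atTop_atTop
  have := (isBigO_log_norm_add_sub_log_norm hN ((a : ℂ) + T * I)).trans_tendsto
    (tendsto_inv_atTop_zero.comp hN)
  simpa [add_comm, add_left_comm, add_assoc] using this.neg

theorem im_logGamma_add_mul_I_sub_mem_Icc {z : ℂ} (hz : 0 < z.re) (hz' : 1 ≤ z.im) {δ : ℝ}
    (hδ : 0 ≤ δ) :
    (logGamma (z + δ * I)).im - (logGamma z).im ∈
      Set.Icc (δ * (Real.log ‖z‖ - 4 / z.im)) (δ * (Real.log ‖z + δ * I‖ + 4 / (z.im + δ))) := by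
  set w := z + δ * I
  have hw : w.re = z.re := by simp [w]
  have hw' : w.im = z.im + δ := by simp [w]
  have hlim : Tendsto (fun N => (logGammaSeq w N).im - (logGammaSeq z N).im) atTop
      (𝓝 ((logGamma w).im - (logGamma z).im)) :=
    ((continuous_im.tendsto _).comp (tendsto_logGammaSeq w)).sub
      ((continuous_im.tendsto _).comp (tendsto_logGammaSeq z))
  have hseq (N : ℕ) : (logGammaSeq w N).im - (logGammaSeq z N).im = δ * Real.log N -
      ∑ k ∈ range (N + 1),
        (Real.arctan ((z.im + δ) / (z.re + k)) - Real.arctan (z.im / (z.re + k))) := by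
    rw [im_logGammaSeq (hw ▸ hz), im_logGammaSeq hz, hw, hw', sum_sub_distrib]; ring
  have hS (N : ℕ) :=
    sum_arctan_div_sub_arctan_div_mem_Icc hz hz' (le_add_of_nonneg_right hδ) (N + 1)
  simp only [add_sub_cancel_left, Nat.cast_add, Nat.cast_one] at hS
  have hz₀ : Real.log ‖(z.re : ℂ) + z.im * I‖ = Real.log ‖z‖ := by rw [re_add_im]
  have hw₀ : Real.log ‖(z.re : ℂ) + ((z.im + δ : ℝ) : ℂ) * I‖ = Real.log ‖w‖ := by
    rw [← hw, ← hw', re_add_im]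
  have hlog (T : ℝ) : Tendsto
      (fun N : ℕ => Real.log N - Real.log ‖((z.re + (N + 1) : ℝ) : ℂ) + T * I‖) atTop (𝓝 0) := by
    convert tendsto_log_sub_log_norm_add_mul_I (z.re + 1) T using 7
    ring
  constructor
  · have hlow := ((hlog z.im).const_mul δ).add_const (δ * (Real.log ‖z‖ - 4 / z.im))
    rw [mul_zero, zero_add] at hlow
    refine le_of_tendsto_of_tendsto' hlow hlim fun N => ?_
    have := (hS N).2
    rw [hz₀] at this
    rw [hseq]
    linear_combination this
  · have hupp :=
      ((hlog (z.im + δ)).const_mul δ).add_const (δ * (Real.log ‖w‖ + 4 / (z.im + δ)))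
    rw [mul_zero, zero_add] at hupp
    refine le_of_tendsto_of_tendsto' hlim hupp fun N => ?_
    have := (hS N).1
    rw [hw₀] at this
    rw [hseq]
    linear_combination this

lemma isBigO_of_le_of_le {α F : Type*} [Norm F] {l : Filter α} {f g h : α → ℝ} {k : α → F}
    (hg : g =O[l] k) (hh : h =O[l] k) (hgf : ∀ᶠ x in l, g x ≤ f x)
    (hfh : ∀ᶠ x in l, f x ≤ h x) :
    f =O[l] k := by
  refine (IsBigO.of_bound' ?_).trans (hg.norm_left.add hh.norm_left)
  filter_upwards [hgf, hfh] with x h₁ h₂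
  rw [Real.norm_eq_abs (‖g x‖ + ‖h x‖), abs_of_nonneg (by positivity)]
  exact (abs_le_max_abs_abs h₁ h₂).trans (max_le_add_of_nonneg (abs_nonneg _) (abs_nonneg _))

lemma isBigO_inv_add_mul_natCast (c : ℝ) {δ : ℝ} (hδ : 0 < δ) :
    (fun n : ℕ => (c + δ * n)⁻¹) =O[atTop] fun n => 1 / (n : ℝ) := by
  refine IsBigO.of_bound (2 / δ) ?_
  filter_upwards [(tendsto_natCast_atTop_atTop (R := ℝ)).eventually_ge_atTop (2 * |c| / δ + 1)]
    with n hn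
  have hc : 2 * |c| ≤ δ * n := by
    have := (div_le_iff₀' hδ).1 (le_trans (le_add_of_nonneg_right zero_le_one) hn); linarith
  have hn0 : (0 : ℝ) < n := by
    linarith [div_nonneg (mul_nonneg zero_le_two (abs_nonneg c)) hδ.le]
  have hδn : 0 < δ * n := by positivity
  have hpos : δ * n / 2 ≤ c + δ * n := by linarith [neg_abs_le c]
  rw [Real.norm_eq_abs, Real.norm_eq_abs, abs_inv, abs_of_pos (by linarith),
    abs_of_pos (by positivity), div_mul_div_comm, mul_one,
    inv_le_comm₀ (by linarith) (by positivity), inv_div]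
  linarith

lemma isBigO_log_norm_add_mul_I_sub_log (w : ℂ) {δ : ℝ} (hδ : 0 < δ) :
    (fun n : ℕ => Real.log ‖w + ((δ * n : ℝ) : ℂ) * I‖ - Real.log (δ * n)) =O[atTop]
      fun n => 1 / (n : ℝ) := by
  have hnorm (n : ℕ) : ‖((δ * n : ℝ) : ℂ) * I‖ = δ * n := by
    rw [norm_mul, norm_I, mul_one, norm_real, Real.norm_of_nonneg (by positivity)]
  have hζ : Tendsto (fun n : ℕ => ‖((δ * n : ℝ) : ℂ) * I‖) atTop atTop := by
    simpa only [hnorm] using tendsto_natCast_atTop_atTop.const_mul_atTop hδ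
  have := isBigO_log_norm_add_sub_log_norm hζ w
  simp only [hnorm] at this
  exact this.trans (by simpa only [zero_add] using isBigO_inv_add_mul_natCast 0 hδ)

theorem isBigO_im_logGamma_add_mul_I_sub {u : ℂ} (hu : 0 < u.re) {δ : ℝ} (hδ : 0 < δ) :
    (fun n : ℕ => (logGamma (u + ((δ * n : ℝ) : ℂ) * I + δ * I)).im -
        (logGamma (u + ((δ * n : ℝ) : ℂ) * I)).im - δ * Real.log (δ * n)) =O[atTop]
      fun n => 1 / (n : ℝ) := by
  have hkey : ∀ᶠ n : ℕ in atTop, (logGamma (u + ((δ * n : ℝ) : ℂ) * I + δ * I)).im -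
      (logGamma (u + ((δ * n : ℝ) : ℂ) * I)).im ∈
      Set.Icc (δ * (Real.log ‖u + ((δ * n : ℝ) : ℂ) * I‖ - 4 / (u.im + δ * n)))
        (δ * (Real.log ‖u + ((δ * n : ℝ) : ℂ) * I + δ * I‖ + 4 / (u.im + δ * n + δ))) := by
    have hT : Tendsto (fun n : ℕ => u.im + δ * n) atTop atTop :=
      tendsto_atTop_add_const_left _ _ (tendsto_natCast_atTop_atTop.const_mul_atTop hδ)
    filter_upwards [hT.eventually_ge_atTop 1] with n hn
    simpa using im_logGamma_add_mul_I_sub_mem_Icc (z := u + ((δ * n : ℝ) : ℂ) * I)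
      (by simpa using hu) (by simpa using hn) hδ.le
  refine isBigO_of_le_of_le
    (((isBigO_log_norm_add_mul_I_sub_log u hδ).sub
      ((isBigO_inv_add_mul_natCast u.im hδ).const_mul_left 4)).const_mul_left δ)
    (((isBigO_log_norm_add_mul_I_sub_log (u + δ * I) hδ).add
      ((isBigO_inv_add_mul_natCast (u.im + δ) hδ).const_mul_left 4)).const_mul_left δ)
    (hkey.mono fun n hn => ?_) (hkey.mono fun n hn => ?_)
  · linear_combination hn.1
  · rw [add_right_comm u] at hn ⊢
    linear_combination hn.2

lemma ne_neg_natCast_of_re_pos {z : ℂ} (hz : 0 < z.re) (m : ℕ) : z ≠ -m := fun h => by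
  have : z.re = -m := by simp [h]
  linarith [m.cast_nonneg (α := ℝ)]

theorem stmt_17 (u : ℂ) (hu : 0 < u.re) (v : ℝ) (hv : 0 < v) :
    ∃ (E : ℕ → ℝ) (m : ℕ → ℤ),
      (∀ n : ℕ,
        Complex.arg (Complex.Gamma (u + 2 * Complex.I * v * (n + 1) / (π : ℂ)))
          - Complex.arg (Complex.Gamma (u + 2 * Complex.I * v * n / (π : ℂ)))
        = (2 * v / π) * Real.log (2 * v * n / π) + E n + 2 * π * (m n)) ∧
      E =O[atTop] (fun n : ℕ => 1 / (n : ℝ)) := by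
  set δ : ℝ := 2 * v / π
  have hδ : 0 < δ := by positivity
  set z : ℕ → ℂ := fun n => u + ((δ * n : ℝ) : ℂ) * I
  have hz (n : ℕ) : u + 2 * I * v * n / π = z n := by simp only [z, δ]; push_cast; field_simp
  have hz_succ (n : ℕ) : u + 2 * I * v * (n + 1) / π = z n + δ * I := by
    simp only [z, δ]; push_cast; field_simp; ring
  have hpole (w : ℂ) (hw : w.re = u.re) := ne_neg_natCast_of_re_pos (hw ▸ hu)
  choose k₀ hk₀ using fun n => arg_Gamma_eq (hpole (z n) (by simp [z]))
  choose k₁ hk₁ using fun n => arg_Gamma_eq (hpole (z n + δ * I) (by simp [z]))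
  refine ⟨_, fun n => k₁ n - k₀ n, fun n => ?_, isBigO_im_logGamma_add_mul_I_sub hu hδ⟩
  rw [hz_succ, hz, hk₀, hk₁, show 2 * v * n / π = δ * n by ring, Int.cast_sub]
  ring
end
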